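/- (Λ⁺ commutes with four-fold Clifford conjugation.) For every Clifford unitary C on (Fin N → Fin 2), (Cᴴ)^{⊗4} * Λ⁺ * C^{⊗4} = Λ⁺; equivalently, Λ⁺ * C^{⊗4} = C^{⊗4} * Λ⁺. -/

import Mathlib

open Matrix Kronecker
open scoped Classical

noncomputable section

/-- Single-qubit Pauli matrices. -/
def pauli : Fin 4 → Matrix (Fin 2) (Fin 2) ℂ :=
  ![1, !![0, 1; 1, 0], !![0, -Complex.I; Complex.I, 0], !![1, 0; 0, -1]]

/-- Pauli string on `N` qubits with label `a`. -/
def PauliString {N : ℕ} (a : Fin N → Fin 4) :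
    Matrix (Fin N → Fin 2) (Fin N → Fin 2) ℂ :=
  fun f g => ∏ k, pauli (a k) (f k) (g k)

/-- Reduced Choi state: partial trace over the doubled-B factor of the
normalized Choi state of `O`. -/
def rhoA {ιA ιB : Type*} [Fintype ιA] [Fintype ιB]
    (O : Matrix (ιA × ιB) (ιA × ιB) ℂ) :
    Matrix (ιA × ιA) (ιA × ιA) ℂ :=
  fun p q =>
    (1 / (Fintype.card ιA * Fintype.card ιB : ℂ)) *
      ∑ b : ιB, ∑ b' : ιB, O (p.1, b) (p.2, b') * star (O (q.1, b) (q.2, b'))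

/-- Identification of `N = N_A + N_B` qubits with the pair of subsystems. -/
def qubitEquiv (NA NB : ℕ) :
    (Fin (NA + NB) → Fin 2) ≃ (Fin NA → Fin 2) × (Fin NB → Fin 2) :=
  (Equiv.arrowCongr finSumFinEquiv.symm (Equiv.refl (Fin 2))).trans
    (Equiv.sumArrowEquivProdArrow _ _ _)

/-- Reduced Choi state of an `N = N_A + N_B` qubit operator, subsystem A
being the first `N_A` qubits. -/
def rhoAq (NA NB : ℕ)
    (O : Matrix (Fin (NA + NB) → Fin 2) (Fin (NA + NB) → Fin 2) ℂ) :
    Matrix ((Fin NA → Fin 2) × (Fin NA → Fin 2))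
      ((Fin NA → Fin 2) × (Fin NA → Fin 2)) ℂ :=
  rhoA (Matrix.reindex (qubitEquiv NA NB) (qubitEquiv NA NB) O)

/-- `n`-fold replica (tensor power) of a matrix. -/
def replica {ι : Type*} (n : ℕ) (O : Matrix ι ι ℂ) :
    Matrix (Fin n → ι) (Fin n → ι) ℂ :=
  fun f g => ∏ a, O (f a) (g a)

/-- Replica permutation operator. -/
def Tperm {ι : Type*} [DecidableEq ι] {n : ℕ} (π : Equiv.Perm (Fin n)) :
    Matrix (Fin n → ι) (Fin n → ι) ℂ :=
  fun f g => if f = g ∘ π then 1 else 0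

/-- Number of cycles of a permutation, counting fixed points as 1-cycles. -/
def numCycles {n : ℕ} (π : Equiv.Perm (Fin n)) : ℕ :=
  Multiset.card π.cycleType + (Finset.univ.filter fun x => π x = x).card

/-- `δ(π) = 0` if `π` has no fixed points and all cycles of even length,
else `δ(π) = 1`. -/
def deltaOdd {n : ℕ} (π : Equiv.Perm (Fin n)) : ℕ :=
  if (∀ x, π x ≠ x) ∧ (∀ c ∈ π.cycleType, Even c) then 0 else 1

/-- Projector onto four-fold replicated Pauli strings. -/
def LambdaPlus (N : ℕ) :
    Matrix (Fin 4 → (Fin N → Fin 2)) (Fin 4 → (Fin N → Fin 2)) ℂ :=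
  (1 / (4 ^ N : ℂ)) • ∑ a : Fin N → Fin 4, replica 4 (PauliString a)

def permA : Equiv.Perm (Fin 4) := Equiv.swap 0 1 * Equiv.swap 2 3
def permB : Equiv.Perm (Fin 4) := Equiv.swap 0 3 * Equiv.swap 1 2

/-- The purity contraction permutation operator `T'` on four replicas of a
bipartite system. -/
def Tprime {ιA ιB : Type*} [DecidableEq ιA] [DecidableEq ιB] :
    Matrix (Fin 4 → ιA × ιB) (Fin 4 → ιA × ιB) ℂ :=
  fun f g =>
    if (∀ a, (f a).1 = (g (permA a)).1 ∧ (f a).2 = (g (permB a)).2) then 1 else 0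

/-- The unitary stabilizer group of `U` (as a finite set of pairs of Pauli
labels). -/
def Stab {N : ℕ} (U : Matrix (Fin N → Fin 2) (Fin N → Fin 2) ℂ) :
    Finset ((Fin N → Fin 4) × (Fin N → Fin 4)) :=
  Finset.univ.filter fun p =>
    Matrix.trace (PauliString p.1 * Uᴴ * PauliString p.2 * U) / (2 ^ N : ℂ)
      ∈ ({1, -1} : Set ℂ)


/-!
Conjugation by a Clifford unitary permutes the Pauli strings up to phases in `{±1, ±i}`,
and these phases disappear in the fourth tensor power. The induced map on labels is
injective because distinct Pauli strings are orthogonal in the Hilbert–Schmidt pairing,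
so the sum of `P_a^{⊗4}` defining `Λ⁺` is merely reindexed.
-/

section Replica

variable {ι : Type*} (n : ℕ)

lemma replica_mul [Fintype ι] (A B : Matrix ι ι ℂ) : replica n A * replica n B = replica n (A * B) := by
  ext f g
  simp only [replica, Matrix.mul_apply, ← Finset.prod_mul_distrib]
  rw [Finset.prod_univ_sum (fun _ => Finset.univ) (fun a x => A (f a) x * B x (g a)),
    Fintype.piFinset_univ]

lemma replica_one [DecidableEq ι] : replica n (1 : Matrix ι ι ℂ) = 1 := by
  ext f g
  by_cases h : f = g
  · subst h
    simp [replica]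
  · obtain ⟨a, ha⟩ := Function.ne_iff.mp h
    simp only [replica, Matrix.one_apply, if_neg h]
    exact Finset.prod_eq_zero (Finset.mem_univ a) (if_neg ha)

lemma replica_smul (c : ℂ) (A : Matrix ι ι ℂ) : replica n (c • A) = c ^ n • replica n A := by
  ext f g
  simp [replica, Finset.prod_mul_distrib]

lemma replica_conj_eq_of_conj_eq_smul [Fintype ι] {U V A B : Matrix ι ι ℂ} {c : ℂ} (hc : c ^ n = 1)
    (h : V * A * U = c • B) : replica n V * replica n A * replica n U = replica n B := by
  rw [replica_mul, replica_mul, h, replica_smul, hc, one_smul]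

end Replica

lemma mul_comm_of_conj_eq {M : Type*} [Monoid M] {L U V : M} (hUV : U * V = 1)
    (h : V * L * U = L) : L * U = U * L :=
  calc L * U = U * V * (L * U) := by rw [hUV, one_mul]
    _ = U * (V * L * U) := by simp only [mul_assoc]
    _ = U * L := by rw [h]

lemma pow_four_eq_one_of_mem {c : ℂ} (hc : c ∈ ({1, -1, Complex.I, -Complex.I} : Set ℂ)) :
    c ^ 4 = 1 := by
  rcases hc with rfl | rfl | rfl | rfl <;>
    norm_num [show (-Complex.I) ^ 4 = Complex.I ^ 4 by ring, Complex.I_pow_four]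

lemma pauli_sum_star_mul (i j : Fin 4) :
    ∑ x, ∑ y, star (pauli i x y) * pauli j x y = if i = j then 2 else 0 := by
  fin_cases i <;> fin_cases j <;>
    simp [pauli, Fin.sum_univ_two, Matrix.one_apply, Complex.conj_I] <;> norm_num

lemma pauliString_sum_star_mul {N : ℕ} (a a' : Fin N → Fin 4) :
    ∑ f, ∑ g, star (PauliString a f g) * PauliString a' f g = if a = a' then 2 ^ N else 0 := by
  have hfactor : ∑ f, ∑ g, star (PauliString a f g) * PauliString a' f g =
      ∏ k, ∑ x, ∑ y, star (pauli (a k) x y) * pauli (a' k) x y := by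
    simp only [PauliString, star_prod, ← Finset.prod_mul_distrib]
    simp only [Finset.prod_univ_sum (fun _ : Fin N => (Finset.univ : Finset (Fin 2))),
      Fintype.piFinset_univ]
  rw [hfactor]
  simp only [pauli_sum_star_mul]
  split_ifs with h
  · simp [h]
  · obtain ⟨k, hk⟩ := Function.ne_iff.mp h
    exact Finset.prod_eq_zero (Finset.mem_univ k) (if_neg hk)

lemma eq_of_smul_pauliString_eq_smul {N : ℕ} {a a' : Fin N → Fin 4} {c c' : ℂ} (hc : c ≠ 0)
    (h : c • PauliString a = c' • PauliString a') : a = a' := by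
  have hpair := congrArg (fun M => ∑ f, ∑ g, star (PauliString a f g) * M f g) h
  simp only [Matrix.smul_apply, smul_eq_mul, mul_left_comm _ c, mul_left_comm _ c',
    ← Finset.mul_sum, pauliString_sum_star_mul] at hpair
  by_contra hne
  simp [if_neg hne, hc] at hpair

lemma injective_of_conj_pauliString_eq_smul {N : ℕ} {C : Matrix (Fin N → Fin 2) (Fin N → Fin 2) ℂ}
    (hC : C * Cᴴ = 1) {b : (Fin N → Fin 4) → Fin N → Fin 4} {c : (Fin N → Fin 4) → ℂ}
    (hc : ∀ a, c a ≠ 0) (h : ∀ a, Cᴴ * PauliString a * C = c a • PauliString (b a)) :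
    Function.Injective b := by
  have hrecover : ∀ a, PauliString a = c a • (C * PauliString (b a) * Cᴴ) := fun a => by
    calc PauliString a = C * Cᴴ * PauliString a * (C * Cᴴ) := by
          rw [hC, Matrix.one_mul, Matrix.mul_one]
      _ = C * (Cᴴ * PauliString a * C) * Cᴴ := by simp only [Matrix.mul_assoc]
      _ = c a • (C * PauliString (b a) * Cᴴ) := by
          rw [h a, Matrix.mul_smul, Matrix.smul_mul]
  intro a a' hb
  refine eq_of_smul_pauliString_eq_smul (hc a') (c' := c a) ?_
  rw [hrecover a, hrecover a', hb, smul_smul, smul_smul, mul_comm]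

/-- `Λ⁺` commutes with four-fold Clifford conjugation. -/
theorem lambdaPlus_clifford_invariant (N : ℕ)
    (C : Matrix (Fin N → Fin 2) (Fin N → Fin 2) ℂ)
    (hC : C ∈ Matrix.unitaryGroup (Fin N → Fin 2) ℂ)
    (hCliff : ∀ a : Fin N → Fin 4, ∃ b : Fin N → Fin 4,
      ∃ c ∈ ({1, -1, Complex.I, -Complex.I} : Set ℂ),
        Cᴴ * PauliString a * C = c • PauliString b) :
    replica 4 Cᴴ * LambdaPlus N * replica 4 C = LambdaPlus N ∧
    LambdaPlus N * replica 4 C = replica 4 C * LambdaPlus N := by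
  choose b c hc hconj using hCliff
  have hCunit : C * Cᴴ = 1 := Matrix.mem_unitaryGroup_iff.mp hC
  have hc4 : ∀ a, c a ^ 4 = 1 := fun a => pow_four_eq_one_of_mem (hc a)
  have hb : Function.Bijective b := Finite.injective_iff_bijective.mp <|
    injective_of_conj_pauliString_eq_smul hCunit (fun a h0 => by simpa [h0] using hc4 a) hconj
  have hinv : replica 4 Cᴴ * LambdaPlus N * replica 4 C = LambdaPlus N := by
    rw [LambdaPlus, Matrix.mul_smul, Matrix.smul_mul, Matrix.mul_sum, Matrix.sum_mul,
      ← hb.sum_comp (fun a => replica 4 (PauliString a))]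
    congr 1
    exact Finset.sum_congr rfl fun a _ => replica_conj_eq_of_conj_eq_smul 4 (hc4 a) (hconj a)
  exact ⟨hinv, mul_comm_of_conj_eq (by rw [replica_mul, hCunit, replica_one]) hinv⟩

end
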